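/- arXiv:0903.5361 — 2 statements merged into one kernel-verified Lean document; each statement's English description precedes it below -/
import Mathlib

section
/- Let 1 ≤ d < √3 and let Δ(d) be the intersection of the three closed unit balls in ℝ² centered at c₁ = (0,0), c₂ = (d,0), c₃ = (d/2, (√3/2)·d). Then the minimal width of Δ(d) equals 1 − (1/2)·√(4 + 2d² − 2√3·d·√(4 − d²)). -/
open Metric Real MeasureTheory
open scoped InnerProductSpace Pointwise ENNReal

noncomputable section

/-- The Euclidean plane. -/
abbrev E2 := EuclideanSpace ℝ (Fin 2)

/-- The point of the Euclidean plane with the given coordinates. -/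
def pt (a b : ℝ) : E2 := (EuclideanSpace.equiv (Fin 2) ℝ).symm ![a, b]

/-- The width of a set `C` in the direction of the unit vector `u`. -/
def dirWidth (C : Set E2) (u : E2) : ℝ :=
  sSup {w : ℝ | ∃ x ∈ C, ∃ y ∈ C, w = ⟪x - y, u⟫_ℝ}

/-- The minimal width of a set: the infimum of the directional widths over all
unit vectors. -/
def minWidth (C : Set E2) : ℝ :=
  sInf {w : ℝ | ∃ u : E2, ‖u‖ = 1 ∧ w = dirWidth C u}

/-- The inradius of a set. -/
def inradius (C : Set E2) : ℝ :=
  sSup {r : ℝ | 0 ≤ r ∧ ∃ c : E2, closedBall c r ⊆ C}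

/-- The circumradius of a set. -/
def circumradius (C : Set E2) : ℝ :=
  sInf {r : ℝ | 0 ≤ r ∧ ∃ c : E2, C ⊆ closedBall c r}

/-- The dual disk-polygon of a set `D`. -/
def dualDP (D : Set E2) : Set E2 := {y : E2 | ∀ x ∈ D, dist x y ≤ 1}

/-!
The corners of `Δ(d)` lie at distance `L = (√3 d - √(4 - d²)) / 2` from their nearest centers.
Perpendicular to a side of the triangle of centers, `Δ(d)` lies between a corner and the arc
opposite to it, so its width there is `1 - L`. Conversely, every unit vector `u` makes an angle of
at most 30° with some side `pq`, up to sign. Either `p + u` or `q - u` lies in `Δ(d)`, and pairing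
that point of an arc with the corner near `p` (resp. `q`) gives width at least `1 - L`; or neither
does, and then `u` is so close to the direction of `pq` that the corners near `p` and `q` are
already `(3 - d²) / 2 ≥ 1 - L` apart in direction `u`.
-/

section InnerProductSpace

variable {V : Type*} [NormedAddCommGroup V] [InnerProductSpace ℝ V]

theorem add_mem_closedBall_one {p r u : V} (hu : ‖u‖ = 1)
    (h : ‖r - p‖ ^ 2 ≤ 2 * ⟪r - p, u⟫_ℝ) : p + u ∈ closedBall r 1 := by
  have hsq : ‖p + u - r‖ ^ 2 ≤ 1 := by
    rw [show p + u - r = u - (r - p) by abel, norm_sub_sq_real, hu, real_inner_comm]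
    linarith
  rw [mem_closedBall, dist_eq_norm]
  nlinarith [norm_nonneg (p + u - r)]

theorem one_sub_le_inner_add_sub {p v u : V} {L : ℝ} (hu : ‖u‖ = 1)
    (hv : v ∈ closedBall p L) : 1 - L ≤ ⟪p + u - v, u⟫_ℝ := by
  have hcs := real_inner_le_norm (v - p) u
  rw [hu, mul_one, ← dist_eq_norm] at hcs
  rw [show p + u - v = u - (v - p) by abel, inner_sub_left, real_inner_self_eq_norm_sq, hu]
  linarith [mem_closedBall.mp hv]

end InnerProductSpace

theorem le_dirWidth {C : Set E2} (hC : Bornology.IsBounded C) (u : E2) {x y : E2}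
    (hx : x ∈ C) (hy : y ∈ C) : ⟪x - y, u⟫_ℝ ≤ dirWidth C u := by
  obtain ⟨R, hR⟩ := hC.subset_closedBall x
  refine le_csSup ⟨(R + R) * ‖u‖, ?_⟩ ⟨x, hx, y, hy, rfl⟩
  rintro _ ⟨x', hx', y', hy', rfl⟩
  calc ⟪x' - y', u⟫_ℝ ≤ ‖x' - y'‖ * ‖u‖ := real_inner_le_norm _ _
    _ ≤ (R + R) * ‖u‖ := by
      gcongr
      rw [← dist_eq_norm]
      exact dist_triangle_right _ _ x |>.trans (add_le_add (hR hx') (hR hy'))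

theorem dirWidth_le {C : Set E2} (hC : C.Nonempty) {u : E2} {t : ℝ}
    (h : ∀ x ∈ C, ∀ y ∈ C, ⟪x - y, u⟫_ℝ ≤ t) : dirWidth C u ≤ t := by
  obtain ⟨x, hx⟩ := hC
  refine csSup_le ⟨_, x, hx, x, hx, rfl⟩ ?_
  rintro _ ⟨x, hx, y, hy, rfl⟩
  exact h x hx y hy

theorem minWidth_eq_of_le_dirWidth {C : Set E2} {t : ℝ} (h : ∀ u, ‖u‖ = 1 → t ≤ dirWidth C u)
    {u₀ : E2} (hu₀ : ‖u₀‖ = 1) (h₀ : dirWidth C u₀ ≤ t) : minWidth C = t := by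
  have hlow : t ∈ lowerBounds {w | ∃ u : E2, ‖u‖ = 1 ∧ w = dirWidth C u} := by
    rintro _ ⟨u, hu, rfl⟩
    exact h u hu
  exact le_antisymm ((csInf_le ⟨t, hlow⟩ ⟨u₀, hu₀, rfl⟩).trans h₀) (le_csInf ⟨_, u₀, hu₀, rfl⟩ hlow)

theorem eq_pt (x : E2) : x = pt (x 0) (x 1) := by
  ext i; fin_cases i <;> rfl

theorem pt_sub_pt (a b c e : ℝ) : pt a b - pt c e = pt (a - c) (b - e) := by
  ext i; fin_cases i <;> rfl

theorem smul_pt (t a b : ℝ) : t • pt a b = pt (t * a) (t * b) := by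
  ext i; fin_cases i <;> rfl

theorem inner_pt_pt (a b c e : ℝ) : ⟪pt a b, pt c e⟫_ℝ = a * c + b * e := by
  simp [pt, PiLp.inner_apply, Fin.sum_univ_two, mul_comm]

theorem norm_pt (a b : ℝ) : ‖pt a b‖ = √(a ^ 2 + b ^ 2) := by
  simp [pt, EuclideanSpace.norm_eq, Fin.sum_univ_two]

theorem dist_pt_pt (a b c e : ℝ) : dist (pt a b) (pt c e) = √((a - c) ^ 2 + (b - e) ^ 2) := by
  rw [dist_eq_norm, pt_sub_pt, norm_pt]

theorem pt_mem_closedBall_pt {a b c e r : ℝ} (hr : 0 ≤ r) :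
    pt a b ∈ closedBall (pt c e) r ↔ (a - c) ^ 2 + (b - e) ^ 2 ≤ r ^ 2 := by
  rw [mem_closedBall, dist_pt_pt, Real.sqrt_le_left hr]

-- Every unit vector `(a, b)` is within 30° of the line at angle 0°, 60° or 120°.
theorem sqrt_three_le_abs_sector {a b : ℝ} (hab : a ^ 2 + b ^ 2 = 1) :
    √3 ≤ |2 * a| ∨ √3 ≤ |a + √3 * b| ∨ √3 ≤ |√3 * b - a| := by
  have hs : √3 ^ 2 = 3 := Real.sq_sqrt (by norm_num)
  by_contra! h
  obtain ⟨h₁, h₂, h₃⟩ := h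
  rw [abs_lt] at h₁ h₂ h₃
  have hp : 0 < 3 - 4 * a ^ 2 := by nlinarith
  have hq : 0 < 3 - (a + √3 * b) ^ 2 := by nlinarith
  have hr : 0 < 3 - (√3 * b - a) ^ 2 := by nlinarith
  nlinarith [mul_pos hq hr]

def diskTriangle (d : ℝ) : Set E2 :=
  closedBall (pt 0 0) 1 ∩ closedBall (pt d 0) 1 ∩ closedBall (pt (d / 2) (Real.sqrt 3 / 2 * d)) 1

namespace diskTriangle

/- The corner `vertex₁ d` of `Δ(d)` nearest to the center `pt 0 0` lies at distance `vertexDist d`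
from it, and `vertexSide d` is the side of the equilateral triangle formed by the three corners. -/

def vertexDist (d : ℝ) : ℝ := (√3 * d - √(4 - d ^ 2)) / 2

def vertexSide (d : ℝ) : ℝ := (√3 * √(4 - d ^ 2) - d) / 2

def vertex₁ (d : ℝ) : E2 := pt (√3 * vertexDist d / 2) (vertexDist d / 2)

def vertex₂ (d : ℝ) : E2 := pt (d - √3 * vertexDist d / 2) (vertexDist d / 2)

def vertex₃ (d : ℝ) : E2 := pt (d / 2) (√(4 - d ^ 2) / 2)

section

variable {d : ℝ}

theorem sq_lt_three (hd0 : 0 ≤ d) (hd2 : d < √3) : d ^ 2 < 3 :=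
  (Real.lt_sqrt hd0).mp hd2

theorem sq_sqrt_four_sub_sq (hd1 : 1 ≤ d) (hd2 : d < √3) : √(4 - d ^ 2) ^ 2 = 4 - d ^ 2 :=
  Real.sq_sqrt (by linarith [sq_lt_three (by linarith) hd2])

theorem vertexDist_nonneg (hd1 : 1 ≤ d) : 0 ≤ vertexDist d := by
  have : √(4 - d ^ 2) ≤ √3 * d := by
    calc √(4 - d ^ 2) ≤ √(3 * d ^ 2) := Real.sqrt_le_sqrt (by nlinarith)
      _ = √3 * d := by rw [Real.sqrt_mul (by norm_num), Real.sqrt_sq (by linarith)]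
  rw [vertexDist]
  linarith

theorem vertexDist_le_one (hd1 : 1 ≤ d) (hd2 : d < √3) : vertexDist d ≤ 1 := by
  have hs : √3 * d ≤ 3 := by
    calc √3 * d ≤ √3 * √3 := by gcongr
      _ = 3 := Real.mul_self_sqrt (by norm_num)
  have hH : 1 ≤ √(4 - d ^ 2) := by
    rw [Real.le_sqrt' zero_lt_one]
    linarith [sq_lt_three (by linarith) hd2]
  rw [vertexDist]
  linarith

theorem vertexDist_sq_sub (hd1 : 1 ≤ d) (hd2 : d < √3) :
    vertexDist d ^ 2 - √3 * d * vertexDist d + d ^ 2 = 1 := by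
  have hs : √3 ^ 2 = 3 := Real.sq_sqrt (by norm_num)
  rw [vertexDist]
  linear_combination (-(d ^ 2) / 4) * hs + sq_sqrt_four_sub_sq hd1 hd2 / 4

theorem one_sub_vertexDist_le (hd1 : 1 ≤ d) (hd2 : d < √3) :
    1 - vertexDist d ≤ (3 - d ^ 2) / 2 := by
  have hd3 := sq_lt_three (by linarith) hd2
  have hH := sq_sqrt_four_sub_sq hd1 hd2
  rw [vertexDist]
  set s := √3
  set H := √(4 - d ^ 2)
  have hs : s ^ 2 = 3 := Real.sq_sqrt (by norm_num)
  have hsd : 0 < s * d - d ^ 2 + 1 := by nlinarith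
  have : H ^ 2 ≤ (s * d - d ^ 2 + 1) ^ 2 := by
    nlinarith [mul_nonneg (by nlinarith : (0:ℝ) ≤ d ^ 2 - 1) (sq_nonneg (d - s))]
  nlinarith [Real.sqrt_nonneg (4 - d ^ 2)]

theorem one_sub_vertexDist_le_vertexSide_mul (hd1 : 1 ≤ d) (hd2 : d < √3) {a b : ℝ}
    (hab : a ^ 2 + b ^ 2 = 1) (h₁ : a + √3 * b < d) (h₂ : a - √3 * b < d) (ha : √3 ≤ 2 * a) :
    1 - vertexDist d ≤ vertexSide d * a := by
  have hL := one_sub_vertexDist_le hd1 hd2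
  have hd3 := sq_lt_three (by linarith) hd2
  have hH := sq_sqrt_four_sub_sq hd1 hd2
  rw [vertexSide]
  set s := √3
  set H := √(4 - d ^ 2)
  have hs : s ^ 2 = 3 := Real.sq_sqrt (by norm_num)
  have hs0 : 0 ≤ s := Real.sqrt_nonneg 3
  have hH0 : 0 ≤ H := Real.sqrt_nonneg _
  have hb : 3 * b ^ 2 < (d - a) ^ 2 := by
    rcases le_or_gt 0 b with hb | hb <;> nlinarith
  have ha' : d + s * H ≤ 4 * a := by
    have : 3 * H ^ 2 < (4 * a - d) ^ 2 := by nlinarith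
    nlinarith [mul_nonneg hs0 hH0, sq_nonneg (4 * a - d - s * H)]
  have hM : (s * H - d) / 2 * (d + s * H) = 6 - 2 * d ^ 2 := by
    linear_combination (H ^ 2 / 2) * hs + (3 / 2) * hH
  have hM0 : 0 ≤ (s * H - d) / 2 := by
    have : d ^ 2 < (s * H) ^ 2 := by rw [mul_pow, hs, hH]; linarith
    linarith [lt_of_pow_lt_pow_left₀ 2 (mul_nonneg hs0 hH0) this]
  calc 1 - vertexDist d ≤ (3 - d ^ 2) / 2 := hL
    _ = (s * H - d) / 2 * (d + s * H) / 4 := by rw [hM]; ring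
    _ ≤ (s * H - d) / 2 * a := by nlinarith [mul_le_mul_of_nonneg_left ha' hM0]

/- Either an arc point `p + u` or `q - u` lies in `C`, and is paired with the corner `v` near `p`
(resp. `w` near `q`), or the corner side `v w`, parallel to `p q`, gives the width. -/
theorem exists_le_inner_sub_of_sector {V : Type*} [NormedAddCommGroup V] [InnerProductSpace ℝ V]
    {C : Set V} {p q r v w u : V} {a b : ℝ} (hd1 : 1 ≤ d) (hd2 : d < √3)
    (hC : C = closedBall p 1 ∩ closedBall q 1 ∩ closedBall r 1)
    (hpq : dist p q = d) (hpr : dist p r = d) (hqr : dist q r = d) (hv : v ∈ C) (hw : w ∈ C)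
    (hvp : v ∈ closedBall p (vertexDist d)) (hwq : w ∈ closedBall q (vertexDist d))
    (hwv : w - v = (vertexSide d / d) • (q - p))
    (hu : ‖u‖ = 1) (hab : a ^ 2 + b ^ 2 = 1)
    (hqpu : ⟪q - p, u⟫_ℝ = d * a) (hrpu : ⟪r - p, u⟫_ℝ = d * (a + √3 * b) / 2)
    (ha : √3 ≤ |2 * a|) :
    ∃ x ∈ C, ∃ y ∈ C, 1 - vertexDist d ≤ ⟪x - y, u⟫_ℝ := by
  wlog ha₀ : √3 ≤ 2 * a generalizing u a b
  · obtain ⟨x, hx, y, hy, h⟩ := this (u := -u) (a := -a) (b := -b) (by rwa [norm_neg])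
      (by linear_combination hab) (by rw [inner_neg_right, hqpu]; ring)
      (by rw [inner_neg_right, hrpu]; ring) (by rwa [mul_neg, abs_neg])
      (by linarith [(le_abs'.mp ha).resolve_right ha₀])
    exact ⟨y, hy, x, hx, by rwa [inner_neg_right, ← inner_neg_left, neg_sub] at h⟩
  subst hC
  have hd0 : 0 < d := by linarith
  have hqpn : ‖q - p‖ = d := by rw [← dist_eq_norm, dist_comm, hpq]
  have hrpn : ‖r - p‖ = d := by rw [← dist_eq_norm, dist_comm, hpr]
  have hprn : ‖p - q‖ = d := by rw [← dist_eq_norm, hpq]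
  have hrqn : ‖r - q‖ = d := by rw [← dist_eq_norm, dist_comm, hqr]
  have hrqu : ⟪r - q, u⟫_ℝ = d * (√3 * b - a) / 2 := by
    rw [show r - q = (r - p) - (q - p) by abel, inner_sub_left, hqpu, hrpu]; ring
  have hpqu : ⟪p - q, -u⟫_ℝ = d * a := by
    rw [← neg_sub, inner_neg_neg, hqpu]
  have hnu : ‖-u‖ = 1 := by rwa [norm_neg]
  have h2a : d ≤ 2 * a := by linarith
  by_cases h₁ : d ≤ a + √3 * b
  · refine ⟨p + u, ⟨⟨?_, ?_⟩, ?_⟩, v, hv, one_sub_le_inner_add_sub hu hvp⟩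
    · simp [hu]
    · exact add_mem_closedBall_one hu (by rw [hqpn, hqpu]; nlinarith)
    · exact add_mem_closedBall_one hu (by rw [hrpn, hrpu]; nlinarith)
  by_cases h₂ : d ≤ a - √3 * b
  · refine ⟨w, hw, q + -u, ⟨⟨?_, ?_⟩, ?_⟩, ?_⟩
    · exact add_mem_closedBall_one hnu (by rw [hprn, hpqu]; nlinarith)
    · simp [hu]
    · exact add_mem_closedBall_one hnu (by rw [hrqn, inner_neg_right, hrqu]; nlinarith)
    · have := one_sub_le_inner_add_sub hnu hwq
      rwa [inner_neg_right, ← inner_neg_left, neg_sub] at this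
  rw [not_le] at h₁ h₂
  refine ⟨w, hw, v, hv, ?_⟩
  calc 1 - vertexDist d ≤ vertexSide d * a :=
        one_sub_vertexDist_le_vertexSide_mul hd1 hd2 hab h₁ h₂ ha₀
    _ = ⟪w - v, u⟫_ℝ := by rw [hwv, real_inner_smul_left, hqpu]; field_simp
theorem vertex₁_mem (hd1 : 1 ≤ d) (hd2 : d < √3) :
    vertex₁ d ∈ diskTriangle d ∧ vertex₁ d ∈ closedBall (pt 0 0) (vertexDist d) := by
  have hs : √3 ^ 2 = 3 := Real.sq_sqrt (by norm_num)
  have hL := vertexDist_sq_sub hd1 hd2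
  have hL0 := vertexDist_nonneg hd1
  have hL1 := vertexDist_le_one hd1 hd2
  have h₁ : vertex₁ d ∈ closedBall (pt 0 0) (vertexDist d) := by
    rw [vertex₁, pt_mem_closedBall_pt hL0]
    linear_combination (vertexDist d ^ 2 / 4) * hs
  refine ⟨⟨⟨closedBall_subset_closedBall hL1 h₁, ?_⟩, ?_⟩, h₁⟩
  · rw [vertex₁, pt_mem_closedBall_pt zero_le_one]
    linear_combination (vertexDist d ^ 2 / 4) * hs + hL
  · rw [vertex₁, pt_mem_closedBall_pt zero_le_one]
    linear_combination ((vertexDist d ^ 2 + d ^ 2) / 4) * hs + hL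

theorem vertex₂_mem (hd1 : 1 ≤ d) (hd2 : d < √3) :
    vertex₂ d ∈ diskTriangle d ∧ vertex₂ d ∈ closedBall (pt d 0) (vertexDist d) := by
  have hs : √3 ^ 2 = 3 := Real.sq_sqrt (by norm_num)
  have hL := vertexDist_sq_sub hd1 hd2
  have hL0 := vertexDist_nonneg hd1
  have hL1 := vertexDist_le_one hd1 hd2
  have h₂ : vertex₂ d ∈ closedBall (pt d 0) (vertexDist d) := by
    rw [vertex₂, pt_mem_closedBall_pt hL0]
    linear_combination (vertexDist d ^ 2 / 4) * hs
  refine ⟨⟨⟨?_, closedBall_subset_closedBall hL1 h₂⟩, ?_⟩, h₂⟩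
  · rw [vertex₂, pt_mem_closedBall_pt zero_le_one]
    linear_combination (vertexDist d ^ 2 / 4) * hs + hL
  · rw [vertex₂, pt_mem_closedBall_pt zero_le_one]
    linear_combination ((vertexDist d ^ 2 + d ^ 2) / 4) * hs + hL

theorem vertex₃_mem (hd1 : 1 ≤ d) (hd2 : d < √3) :
    vertex₃ d ∈ diskTriangle d ∧
      vertex₃ d ∈ closedBall (pt (d / 2) (√3 / 2 * d)) (vertexDist d) := by
  have hH := sq_sqrt_four_sub_sq hd1 hd2
  have hL0 := vertexDist_nonneg hd1
  have hL1 := vertexDist_le_one hd1 hd2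
  have h₃ : vertex₃ d ∈ closedBall (pt (d / 2) (√3 / 2 * d)) (vertexDist d) := by
    rw [vertex₃, pt_mem_closedBall_pt hL0, vertexDist]
    exact le_of_eq (by ring)
  refine ⟨⟨⟨?_, ?_⟩, closedBall_subset_closedBall hL1 h₃⟩, h₃⟩
  all_goals rw [vertex₃, pt_mem_closedBall_pt zero_le_one]; linear_combination hH / 4

theorem vertex₂_sub_vertex₁ (hd : d ≠ 0) :
    vertex₂ d - vertex₁ d = (vertexSide d / d) • (pt d 0 - pt 0 0) := by
  have hs : √3 ^ 2 = 3 := Real.sq_sqrt (by norm_num)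
  rw [vertex₂, vertex₁, pt_sub_pt, pt_sub_pt, smul_pt, vertexSide, vertexDist]
  congr 1
  · field_simp
    linear_combination (-2 * d ^ 2) * hs
  · ring

theorem vertex₃_sub_vertex₁ (hd : d ≠ 0) :
    vertex₃ d - vertex₁ d = (vertexSide d / d) • (pt (d / 2) (√3 / 2 * d) - pt 0 0) := by
  have hs : √3 ^ 2 = 3 := Real.sq_sqrt (by norm_num)
  rw [vertex₃, vertex₁, pt_sub_pt, pt_sub_pt, smul_pt, vertexSide, vertexDist]
  congr 1
  · field_simp
    linear_combination (-d ^ 2) * hs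
  · field_simp
    linear_combination (-d * √(4 - d ^ 2)) * hs

theorem vertex₃_sub_vertex₂ (hd : d ≠ 0) :
    vertex₃ d - vertex₂ d = (vertexSide d / d) • (pt (d / 2) (√3 / 2 * d) - pt d 0) := by
  have hs : √3 ^ 2 = 3 := Real.sq_sqrt (by norm_num)
  rw [vertex₃, vertex₂, pt_sub_pt, pt_sub_pt, smul_pt, vertexSide, vertexDist]
  congr 1
  · field_simp
    linear_combination d * hs
  · field_simp
    linear_combination (-d * √(4 - d ^ 2)) * hs

theorem dist_centers (hd : 0 ≤ d) :
    dist (pt 0 0) (pt d 0) = d ∧ dist (pt 0 0) (pt (d / 2) (√3 / 2 * d)) = d ∧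
      dist (pt d 0) (pt (d / 2) (√3 / 2 * d)) = d := by
  have hs : √3 ^ 2 = 3 := Real.sq_sqrt (by norm_num)
  refine ⟨?_, ?_, ?_⟩ <;> rw [dist_pt_pt, Real.sqrt_eq_iff_eq_sq (by positivity) hd]
  · ring
  · linear_combination (d ^ 2 / 4) * hs
  · linear_combination (d ^ 2 / 4) * hs

theorem dirWidth_diskTriangle_le (hd1 : 1 ≤ d) (hd2 : d < √3) :
    dirWidth (diskTriangle d) (pt 0 1) ≤ 1 - vertexDist d := by
  have hH := sq_sqrt_four_sub_sq hd1 hd2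
  refine dirWidth_le ⟨_, (vertex₃_mem hd1 hd2).1⟩ ?_
  rintro x ⟨⟨hx₁, hx₂⟩, -⟩ y ⟨-, hy₃⟩
  rw [eq_pt x, pt_mem_closedBall_pt zero_le_one] at hx₁ hx₂
  rw [eq_pt y, pt_mem_closedBall_pt zero_le_one] at hy₃
  have hx : x 1 ≤ √(4 - d ^ 2) / 2 := by
    have : (x 1) ^ 2 ≤ (√(4 - d ^ 2) / 2) ^ 2 := by nlinarith [sq_nonneg (2 * x 0 - d)]
    exact abs_le_of_sq_le_sq' this (by positivity) |>.2
  have hy : √3 / 2 * d - 1 ≤ y 1 := by nlinarith [sq_nonneg (y 0 - d / 2)]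
  rw [eq_pt x, eq_pt y, pt_sub_pt, inner_pt_pt, vertexDist]
  linarith

theorem one_sub_vertexDist_le_dirWidth (hd1 : 1 ≤ d) (hd2 : d < √3) {u : E2} (hu : ‖u‖ = 1) :
    1 - vertexDist d ≤ dirWidth (diskTriangle d) u := by
  suffices ∃ x ∈ diskTriangle d, ∃ y ∈ diskTriangle d, 1 - vertexDist d ≤ ⟪x - y, u⟫_ℝ by
    obtain ⟨x, hx, y, hy, h⟩ := this
    exact h.trans (le_dirWidth (isBounded_closedBall.subset fun z hz ↦ hz.1.1) u hx hy)
  have hs : √3 ^ 2 = 3 := Real.sq_sqrt (by norm_num)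
  have hd0 : 0 < d := by linarith
  obtain ⟨a, b, rfl⟩ : ∃ a b, u = pt a b := ⟨_, _, eq_pt u⟩
  have hab : a ^ 2 + b ^ 2 = 1 := by rwa [norm_pt, Real.sqrt_eq_one] at hu
  obtain ⟨h₁₂, h₁₃, h₂₃⟩ := dist_centers hd0.le
  obtain ⟨hv₁, hv₁'⟩ := vertex₁_mem hd1 hd2
  obtain ⟨hv₂, hv₂'⟩ := vertex₂_mem hd1 hd2
  obtain ⟨hv₃, hv₃'⟩ := vertex₃_mem hd1 hd2
  rcases sqrt_three_le_abs_sector hab with h | h | h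
  · exact exists_le_inner_sub_of_sector hd1 hd2 rfl h₁₂ h₁₃ h₂₃ hv₁ hv₂ hv₁' hv₂'
      (vertex₂_sub_vertex₁ hd0.ne') hu hab (by rw [pt_sub_pt, inner_pt_pt]; ring)
      (by rw [pt_sub_pt, inner_pt_pt]; ring) h
  · exact exists_le_inner_sub_of_sector (a := (a + √3 * b) / 2) (b := (√3 * a - b) / 2)
      hd1 hd2 (Set.inter_right_comm _ _ _) h₁₃ h₁₂ (by rw [dist_comm, h₂₃]) hv₁ hv₃ hv₁' hv₃'
      (vertex₃_sub_vertex₁ hd0.ne') hu (by linear_combination hab + (b ^ 2 + a ^ 2) / 4 * hs)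
      (by rw [pt_sub_pt, inner_pt_pt]; ring)
      (by rw [pt_sub_pt, inner_pt_pt]; linear_combination (-(d * a) / 4) * hs)
      (by rwa [mul_div_cancel₀ _ two_ne_zero])
  · exact exists_le_inner_sub_of_sector (a := (√3 * b - a) / 2) (b := -(√3 * a + b) / 2)
      hd1 hd2 (by rw [diskTriangle, Set.inter_assoc, Set.inter_comm]) h₂₃ (by rw [dist_comm, h₁₂])
      (by rw [dist_comm, h₁₃]) hv₂ hv₃ hv₂' hv₃'
      (vertex₃_sub_vertex₂ hd0.ne') hu (by linear_combination hab + (b ^ 2 + a ^ 2) / 4 * hs)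
      (by rw [pt_sub_pt, inner_pt_pt]; ring)
      (by rw [pt_sub_pt, inner_pt_pt]; linear_combination (d * a / 4) * hs)
      (by rwa [mul_div_cancel₀ _ two_ne_zero])

theorem minWidth_eq (hd1 : 1 ≤ d) (hd2 : d < √3) : minWidth (diskTriangle d) = 1 - vertexDist d :=
  minWidth_eq_of_le_dirWidth (fun _ hu ↦ one_sub_vertexDist_le_dirWidth hd1 hd2 hu)
    (by simp [norm_pt]) (dirWidth_diskTriangle_le hd1 hd2)

theorem sqrt_eq_two_mul_vertexDist (hd1 : 1 ≤ d) (hd2 : d < √3) :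
    √(4 + 2 * d ^ 2 - 2 * √3 * d * √(4 - d ^ 2)) = 2 * vertexDist d := by
  have hs : √3 ^ 2 = 3 := Real.sq_sqrt (by norm_num)
  have hsq : 4 + 2 * d ^ 2 - 2 * √3 * d * √(4 - d ^ 2) = (2 * vertexDist d) ^ 2 := by
    rw [vertexDist]
    linear_combination (-d ^ 2) * hs - sq_sqrt_four_sub_sq hd1 hd2
  rw [hsq, Real.sqrt_sq (by linarith [vertexDist_nonneg hd1])]

end

end diskTriangle

/-- The minimal width of the regular disk-triangle `Δ(d)` equals
`1 - (1/2)√(4 + 2d² - 2√3·d·√(4 - d²))`. -/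
theorem minWidth_disk_triangle (d : ℝ) (hd1 : 1 ≤ d) (hd2 : d < Real.sqrt 3) :
    minWidth (closedBall (pt 0 0) 1 ∩ closedBall (pt d 0) 1
        ∩ closedBall (pt (d / 2) (Real.sqrt 3 / 2 * d)) 1)
      = 1 - 1 / 2 * Real.sqrt (4 + 2 * d ^ 2
          - 2 * Real.sqrt 3 * d * Real.sqrt (4 - d ^ 2)) := by
  rw [diskTriangle.sqrt_eq_two_mul_vertexDist hd1 hd2, one_div, inv_mul_cancel_left₀ two_ne_zero]
  exact diskTriangle.minWidth_eq hd1 hd2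
end
end

section
/- Let 0 < d < 1 and let R_d be the Reuleaux triangle of width d given as the intersection of the three closed balls of radius d in ℝ² centered at v₁ = (0,0), v₂ = (d,0), v₃ = (d/2, (√3/2)·d). Then the outer parallel domain R_d + closedBall(0, 1−d) is a convex domain of constant width 2 − d: for every unit vector u, sup{⟪x − y, u⟫ : x, y ∈ R_d + closedBall(0, 1−d)} = 2 − d. -/
open Metric Real MeasureTheory
open scoped InnerProductSpace Pointwise ENNReal

noncomputable section

/-!
Adding a disk of radius `ρ` adds `2ρ` to every directional width, so it suffices that the
Reuleaux triangle on an equilateral triangle `abc` of side `d` has constant width `d`.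
Write a direction as `u = α (b - a) + β (c - a) = α b + β c + γ a` with `α + β + γ = 0`. Two of
the three coefficients have the same sign; if they are the ones attached to the vertices other
than `v`, then `u` or `-u` lies in the cone spanned by the two edges at `v`. The triangle then lies
in the half-plane `⟪z - v, ±u⟫ ≥ 0` and within distance `d` of `v`, while `v ± d u` lies on the
opposite arc, so the width in direction `u` is exactly `d`.
-/

section InnerProductSpace

variable {F : Type*} [NormedAddCommGroup F] [InnerProductSpace ℝ F]

theorem inner_sub_nonneg_of_dist_le {z v c : F} (h : dist z c ≤ dist v c) :
    0 ≤ ⟪z - v, c - v⟫_ℝ := by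
  have hsq := norm_sub_sq_real (z - v) (c - v)
  rw [sub_sub_sub_cancel_right, norm_sub_rev c v] at hsq
  rw [dist_eq_norm, dist_eq_norm] at h
  nlinarith [norm_nonneg (z - c), sq_nonneg ‖z - v‖]

theorem inner_smul_add_smul_nonneg {z v b c : F} {α β : ℝ} (hα : 0 ≤ α) (hβ : 0 ≤ β)
    (hb : dist z b ≤ dist v b) (hc : dist z c ≤ dist v c) :
    0 ≤ ⟪z - v, α • (b - v) + β • (c - v)⟫_ℝ := by
  rw [inner_add_right, real_inner_smul_right, real_inner_smul_right]
  exact add_nonneg (mul_nonneg hα (inner_sub_nonneg_of_dist_le hb))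
    (mul_nonneg hβ (inner_sub_nonneg_of_dist_le hc))

variable {a b c u : F} {d α β : ℝ}

theorem inner_sub_sub_of_dist_eq (hab : dist a b = d) (hbc : dist b c = d) (hca : dist c a = d) :
    ⟪b - a, c - a⟫_ℝ = d ^ 2 / 2 := by
  have hsq := norm_sub_sq_real (b - a) (c - a)
  rw [sub_sub_sub_cancel_right, ← dist_eq_norm, ← dist_eq_norm, ← dist_eq_norm, dist_comm b a,
    hab, hbc, hca] at hsq
  linarith

theorem linearIndependent_sub_of_dist_eq (hd : d ≠ 0) (hab : dist a b = d) (hbc : dist b c = d)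
    (hca : dist c a = d) : LinearIndependent ℝ ![b - a, c - a] := by
  have hbb : ⟪b - a, b - a⟫_ℝ = d ^ 2 := by
    rw [real_inner_self_eq_norm_sq, ← dist_eq_norm, dist_comm, hab]
  have hcc : ⟪c - a, c - a⟫_ℝ = d ^ 2 := by
    rw [real_inner_self_eq_norm_sq, ← dist_eq_norm, hca]
  have hbc' := inner_sub_sub_of_dist_eq hab hbc hca
  have hcb : ⟪c - a, b - a⟫_ℝ = d ^ 2 / 2 := by rw [real_inner_comm, hbc']
  rw [LinearIndependent.pair_iff]
  intro s t hst
  have h₁ := congrArg (⟪·, b - a⟫_ℝ) hst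
  have h₂ := congrArg (⟪·, c - a⟫_ℝ) hst
  simp only [inner_add_left, real_inner_smul_left, inner_zero_left, hbb, hcc, hbc', hcb] at h₁ h₂
  have hd2 : d ^ 2 ≠ 0 := pow_ne_zero 2 hd
  constructor
  · exact (mul_eq_zero.1 (show s * d ^ 2 = 0 by linarith)).resolve_right hd2
  · exact (mul_eq_zero.1 (show t * d ^ 2 = 0 by linarith)).resolve_right hd2

theorem exists_eq_smul_sub_add_smul_sub [FiniteDimensional ℝ F] (hF : Module.finrank ℝ F = 2)
    (hd : d ≠ 0) (hab : dist a b = d) (hbc : dist b c = d) (hca : dist c a = d) (u : F) :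
    ∃ α β : ℝ, u = α • (b - a) + β • (c - a) := by
  have hspan := (linearIndependent_sub_of_dist_eq hd hab hbc hca).span_eq_top_of_card_eq_finrank'
    (by rw [hF, Fintype.card_fin])
  rw [Matrix.range_cons_cons_empty] at hspan
  obtain ⟨α, β, h⟩ := Submodule.mem_span_pair.1 (hspan ▸ Submodule.mem_top : u ∈ _)
  exact ⟨α, β, h.symm⟩

theorem dist_add_smul_le_of_mem_cone (hab : dist a b = d) (hbc : dist b c = d) (hca : dist c a = d)
    (hu : ‖u‖ = 1) (hα : 0 ≤ α) (hβ : 0 ≤ β) (hu_eq : u = α • (b - a) + β • (c - a)) :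
    dist (a + d • u) b ≤ d := by
  have hd : 0 ≤ d := hab ▸ dist_nonneg
  have hbb : ‖b - a‖ = d := by rw [← dist_eq_norm, dist_comm, hab]
  have hcc : ‖c - a‖ = d := by rw [← dist_eq_norm, hca]
  have hbc' := inner_sub_sub_of_dist_eq hab hbc hca
  have hub : ⟪u, b - a⟫_ℝ = α * d ^ 2 + β * (d ^ 2 / 2) := by
    rw [hu_eq, inner_add_left, real_inner_smul_left, real_inner_smul_left,
      real_inner_self_eq_norm_sq, hbb, real_inner_comm, hbc']
  have huu : α ^ 2 * d ^ 2 + α * β * d ^ 2 + β ^ 2 * d ^ 2 = 1 := by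
    have h := norm_add_sq_real (α • (b - a)) (β • (c - a))
    rw [← hu_eq, hu, norm_smul, norm_smul, real_inner_smul_left, real_inner_smul_right, hbb, hcc,
      hbc', Real.norm_eq_abs, Real.norm_eq_abs, abs_of_nonneg hα, abs_of_nonneg hβ] at h
    linarith
  -- equivalent to `d / 2 ≤ ⟪u, b - a⟫`; it holds since `(d (2α + β))² ≥ d² (α² + αβ + β²) = 1`
  have hkey : 1 ≤ d * (2 * α + β) := by
    nlinarith [mul_nonneg hd (by positivity : 0 ≤ 2 * α + β), mul_nonneg hα hβ, sq_nonneg α]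
  have hsq := norm_sub_sq_real (d • u) (b - a)
  rw [norm_smul, real_inner_smul_left, hu, hbb, hub, Real.norm_eq_abs, abs_of_nonneg hd] at hsq
  rw [dist_eq_norm, show a + d • u - b = d • u - (b - a) by abel]
  refine (sq_le_sq₀ (norm_nonneg _) hd).1 ?_
  rw [hsq]
  nlinarith [mul_le_mul_of_nonneg_left hkey (sq_nonneg d)]

end InnerProductSpace

section Reuleaux

variable {X : Type*} [PseudoMetricSpace X] {a b c : X} {d : ℝ}

def reuleauxTriangle (a b c : X) (d : ℝ) : Set X :=
  closedBall a d ∩ closedBall b d ∩ closedBall c d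

theorem reuleauxTriangle_rotate (a b c : X) (d : ℝ) :
    reuleauxTriangle a b c d = reuleauxTriangle b c a d := by
  simp only [reuleauxTriangle, Set.inter_assoc, Set.inter_comm (closedBall a d)]

theorem reuleauxTriangle_subset_closedBall : reuleauxTriangle a b c d ⊆ closedBall a d :=
  Set.inter_subset_left.trans Set.inter_subset_left

theorem left_mem_reuleauxTriangle (hd : 0 ≤ d) (hab : dist a b = d) (hca : dist c a = d) :
    a ∈ reuleauxTriangle a b c d :=
  ⟨⟨mem_closedBall_self hd, hab.le⟩, (dist_comm a c).trans hca |>.le⟩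

end Reuleaux

theorem dirWidth_neg (C : Set E2) (u : E2) : dirWidth C (-u) = dirWidth C u := by
  unfold dirWidth
  congr 1
  ext w
  constructor <;> rintro ⟨x, hx, y, hy, rfl⟩ <;> refine ⟨y, hy, x, hx, ?_⟩ <;>
    rw [inner_neg_right, ← inner_neg_left, neg_sub]

theorem dirWidth_eq_of_supporting {C : Set E2} {v u : E2} {d : ℝ} (hu : ‖u‖ = 1) (hv : v ∈ C)
    (hvu : v + d • u ∈ C) (hC : C ⊆ closedBall v d) (hsupp : ∀ z ∈ C, 0 ≤ ⟪z - v, u⟫_ℝ) :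
    dirWidth C u = d := by
  refine IsGreatest.csSup_eq ⟨⟨v + d • u, hvu, v, hv, ?_⟩, ?_⟩
  · rw [add_sub_cancel_left, real_inner_smul_left, real_inner_self_eq_norm_sq, hu]
    ring
  · rintro _ ⟨x, hx, y, hy, rfl⟩
    have hx' : ⟪x - v, u⟫_ℝ ≤ d := by
      calc ⟪x - v, u⟫_ℝ ≤ ‖x - v‖ * ‖u‖ := real_inner_le_norm _ _
        _ ≤ d := by rw [hu, mul_one, ← dist_eq_norm]; exact hC hx
    have hxy : x - y = (x - v) - (y - v) := by abel
    rw [hxy, inner_sub_left]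
    linarith [hsupp y hy]

theorem dirWidth_add_closedBall {A : Set E2} (hA : A.Nonempty) (hAb : Bornology.IsBounded A)
    {u : E2} (hu : ‖u‖ = 1) {ρ : ℝ} (hρ : 0 ≤ ρ) :
    dirWidth (A + closedBall 0 ρ) u = dirWidth A u + 2 * ρ := by
  set S := {w : ℝ | ∃ x ∈ A, ∃ y ∈ A, w = ⟪x - y, u⟫_ℝ}
  have hset : {w : ℝ | ∃ x ∈ A + closedBall 0 ρ, ∃ y ∈ A + closedBall 0 ρ, w = ⟪x - y, u⟫_ℝ} =
      S + Set.Icc (-(2 * ρ)) (2 * ρ) := by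
    ext w
    constructor
    · rintro ⟨_, ⟨x, hx, p, hp, rfl⟩, _, ⟨y, hy, q, hq, rfl⟩, rfl⟩
      rw [mem_closedBall_zero_iff] at hp hq
      have hpq : |⟪p - q, u⟫_ℝ| ≤ 2 * ρ := by
        calc |⟪p - q, u⟫_ℝ| ≤ ‖p - q‖ * ‖u‖ := abs_real_inner_le_norm _ _
          _ ≤ ‖p‖ + ‖q‖ := by rw [hu, mul_one]; exact norm_sub_le p q
          _ ≤ 2 * ρ := by linarith
      refine ⟨_, ⟨x, hx, y, hy, rfl⟩, _, abs_le.1 hpq, ?_⟩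
      simp only [show x + p - (y + q) = (x - y) + (p - q) by abel, inner_add_left]
    · intro hw
      obtain ⟨_, ⟨x, hx, y, hy, rfl⟩, t, ht, rfl⟩ := Set.mem_add.1 hw
      have hball : (t / 2) • u ∈ closedBall (0 : E2) ρ := by
        rw [mem_closedBall_zero_iff, norm_smul, hu, mul_one, Real.norm_eq_abs, abs_div,
          abs_two]
        linarith [abs_le.2 ht]
      refine ⟨x + (t / 2) • u, Set.add_mem_add hx hball, y + -((t / 2) • u),
        Set.add_mem_add hy (by rwa [mem_closedBall_zero_iff, norm_neg,
          ← mem_closedBall_zero_iff]), ?_⟩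
      rw [show x + (t / 2) • u - (y + -((t / 2) • u)) = (x - y) + t • u by module, inner_add_left,
        real_inner_smul_left, real_inner_self_eq_norm_sq, hu]
      ring
  obtain ⟨C, hC⟩ := isBounded_iff.1 hAb
  have hbdd : BddAbove S := by
    refine ⟨C, ?_⟩
    rintro _ ⟨x, hx, y, hy, rfl⟩
    calc ⟪x - y, u⟫_ℝ ≤ ‖x - y‖ * ‖u‖ := real_inner_le_norm _ _
      _ ≤ C := by rw [hu, mul_one, ← dist_eq_norm]; exact hC hx hy
  obtain ⟨x, hx⟩ := hA
  have hne : S.Nonempty := ⟨_, x, hx, x, hx, rfl⟩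
  unfold dirWidth
  rw [hset, csSup_add hne hbdd (Set.nonempty_Icc.2 (by linarith))
    bddAbove_Icc, csSup_Icc (by linarith)]

theorem mul_nonneg_or_mul_nonneg_or_mul_nonneg (α β γ : ℝ) : 0 ≤ α * β ∨ 0 ≤ β * γ ∨ 0 ≤ γ * α := by
  by_contra! h
  obtain ⟨h₁, h₂, h₃⟩ := h
  -- the product of the three pairwise products is the square `(αβγ)²`
  nlinarith [mul_neg_of_pos_of_neg (mul_pos_of_neg_of_neg h₁ h₂) h₃, sq_nonneg (α * β * γ)]

section ReuleauxWidth

variable {a b c u : E2} {d α β : ℝ}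

theorem dirWidth_reuleauxTriangle_of_mem_cone (hab : dist a b = d) (hbc : dist b c = d)
    (hca : dist c a = d) (hu : ‖u‖ = 1) (hα : 0 ≤ α) (hβ : 0 ≤ β)
    (hu_eq : u = α • (b - a) + β • (c - a)) : dirWidth (reuleauxTriangle a b c d) u = d := by
  have hd : 0 ≤ d := hab ▸ dist_nonneg
  have hac : dist a c = d := (dist_comm a c).trans hca
  refine dirWidth_eq_of_supporting hu (left_mem_reuleauxTriangle hd hab hca)
    ⟨⟨?_, dist_add_smul_le_of_mem_cone hab hbc hca hu hα hβ hu_eq⟩, dist_add_smul_le_of_mem_cone hac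
      ((dist_comm c b).trans hbc) ((dist_comm b a).trans hab) hu hβ hα
      (hu_eq.trans (add_comm _ _))⟩ reuleauxTriangle_subset_closedBall ?_
  · rw [mem_closedBall, dist_eq_norm, add_sub_cancel_left, norm_smul, hu, mul_one,
      Real.norm_eq_abs, abs_of_nonneg hd]
  · rintro z ⟨⟨-, hzb⟩, hzc⟩
    rw [hu_eq]
    exact inner_smul_add_smul_nonneg hα hβ (hab ▸ hzb) (hac ▸ hzc)

theorem dirWidth_reuleauxTriangle_of_mul_nonneg (hab : dist a b = d) (hbc : dist b c = d)
    (hca : dist c a = d) (hu : ‖u‖ = 1) (hαβ : 0 ≤ α * β)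
    (hu_eq : u = α • (b - a) + β • (c - a)) : dirWidth (reuleauxTriangle a b c d) u = d := by
  rcases mul_nonneg_iff.1 hαβ with ⟨hα, hβ⟩ | ⟨hα, hβ⟩
  · exact dirWidth_reuleauxTriangle_of_mem_cone hab hbc hca hu hα hβ hu_eq
  · rw [← dirWidth_neg]
    exact dirWidth_reuleauxTriangle_of_mem_cone hab hbc hca (by rwa [norm_neg])
      (neg_nonneg.2 hα) (neg_nonneg.2 hβ) (by rw [hu_eq]; module)

theorem dirWidth_reuleauxTriangle (hd : 0 < d) (hab : dist a b = d) (hbc : dist b c = d)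
    (hca : dist c a = d) (hu : ‖u‖ = 1) : dirWidth (reuleauxTriangle a b c d) u = d := by
  obtain ⟨α, β, hu_eq⟩ :=
    exists_eq_smul_sub_add_smul_sub finrank_euclideanSpace_fin hd.ne' hab hbc hca u
  rcases mul_nonneg_or_mul_nonneg_or_mul_nonneg α β (-α - β) with h | h | h
  · exact dirWidth_reuleauxTriangle_of_mul_nonneg hab hbc hca hu h hu_eq
  · rw [reuleauxTriangle_rotate]
    exact dirWidth_reuleauxTriangle_of_mul_nonneg hbc hca hab hu h (by rw [hu_eq]; module)
  · rw [reuleauxTriangle_rotate, reuleauxTriangle_rotate]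
    exact dirWidth_reuleauxTriangle_of_mul_nonneg hca hab hbc hu h (by rw [hu_eq]; module)

end ReuleauxWidth

theorem dist_pt (a b a' b' : ℝ) : dist (pt a b) (pt a' b') = √((a - a') ^ 2 + (b - b') ^ 2) := by
  rw [EuclideanSpace.dist_eq, Fin.sum_univ_two, Real.dist_eq, Real.dist_eq, sq_abs, sq_abs]
  rfl

/-- The outer parallel domain of radius `1 - d` of a Reuleaux triangle of width
`d` is a convex domain of constant width `2 - d`. -/
theorem outer_parallel_reuleaux_constant_width (d : ℝ) (hd1 : 0 < d) (hd2 : d < 1) :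
    ∀ u : E2, ‖u‖ = 1 →
      dirWidth ((closedBall (pt 0 0) d ∩ closedBall (pt d 0) d
            ∩ closedBall (pt (d / 2) (Real.sqrt 3 / 2 * d)) d)
          + closedBall (0 : E2) (1 - d)) u = 2 - d := by
  intro u hu
  have h3 : √3 ^ 2 = 3 := Real.sq_sqrt (by norm_num)
  have side (x y : ℝ) (h : x ^ 2 + y ^ 2 = d ^ 2) : √(x ^ 2 + y ^ 2) = d := by
    rw [h, Real.sqrt_sq hd1.le]
  have h₁₂ : dist (pt 0 0) (pt d 0) = d := by rw [dist_pt]; exact side _ _ (by ring)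
  have h₂₃ : dist (pt d 0) (pt (d / 2) (√3 / 2 * d)) = d := by
    rw [dist_pt]; exact side _ _ (by linear_combination d ^ 2 / 4 * h3)
  have h₃₁ : dist (pt (d / 2) (√3 / 2 * d)) (pt 0 0) = d := by
    rw [dist_pt]; exact side _ _ (by linear_combination d ^ 2 / 4 * h3)
  change dirWidth (reuleauxTriangle _ _ _ d + closedBall 0 (1 - d)) u = 2 - d
  rw [dirWidth_add_closedBall ⟨_, left_mem_reuleauxTriangle hd1.le h₁₂ h₃₁⟩
    (isBounded_closedBall.subset reuleauxTriangle_subset_closedBall) hu (by linarith),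
    dirWidth_reuleauxTriangle hd1 h₁₂ h₂₃ h₃₁ hu]
  ring
end
end
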